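/- The syntactic pomset automaton is finitely supported: for every spr-expression e, the support π_Σ(e) (the smallest ⪯_Σ-downward-closed set of ≃-classes containing e) is finite. In particular, every spr-expression is covered by a finite cover-closed set of expressions, where E covers e if e ≃ e₀ + ⋯ + e_{n-1} for some e₀,…,e_{n-1} ∈ E, and E is cover-closed if whenever f ∈ E and g ⪯_Σ f, E covers g. -/

import Mathlib

/-!
Everything below `e` in `⪯` is covered by one finite set: the subterms of `e` together with
their Antimirov-style partial derivatives. Both derivatives are additive, respect `≃` and map
each element of this set to a sum of its elements, and the arguments of a nonzero fork of such
an element are subterms of `e`; so being covered by the set propagates down `⪯`. Up to `≃`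
there are only finitely many sums over subsets of a finite set, hence the support is finite.
-/

open Classical

noncomputable section

/-- Series-parallel rational expressions. -/
inductive SPR (A : Type) : Type where
  | zero : SPR A
  | one : SPR A
  | var (a : A) : SPR A
  | add (e f : SPR A) : SPR A
  | seq (e f : SPR A) : SPR A
  | par (e f : SPR A) : SPR A
  | star (e : SPR A) : SPR A
  | dagger (e : SPR A) : SPR A

/-- The set ℱ of expressions accepting the empty pomset. -/
inductive Null {A : Type} : SPR A → Prop where
  | one : Null SPR.one
  | addL {e : SPR A} (f : SPR A) : Null e → Null (SPR.add e f)
  | addR {e : SPR A} (f : SPR A) : Null e → Null (SPR.add f e)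
  | seq {e f : SPR A} : Null e → Null f → Null (SPR.seq e f)
  | par {e f : SPR A} : Null e → Null f → Null (SPR.par e f)
  | star (e : SPR A) : Null (SPR.star e)
  | dagger (e : SPR A) : Null (SPR.dagger e)

/-- The syntactic congruence ≃: ACI of + and left-distributivity of + over ·. -/
inductive cong {A : Type} : SPR A → SPR A → Prop where
  | add_zero (e : SPR A) : cong (SPR.add e SPR.zero) e
  | add_idem (e : SPR A) : cong (SPR.add e e) e
  | add_comm (e f : SPR A) : cong (SPR.add e f) (SPR.add f e)
  | add_assoc (e f g : SPR A) : cong (SPR.add e (SPR.add f g)) (SPR.add (SPR.add e f) g)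
  | distrib (e f g : SPR A) :
      cong (SPR.seq (SPR.add e f) g) (SPR.add (SPR.seq e g) (SPR.seq f g))
  | refl (e : SPR A) : cong e e
  | symm {e f : SPR A} : cong e f → cong f e
  | trans {e f g : SPR A} : cong e f → cong f g → cong e g
  | add_congr {e e' f f' : SPR A} :
      cong e e' → cong f f' → cong (SPR.add e f) (SPR.add e' f')
  | seq_congr {e e' f f' : SPR A} :
      cong e e' → cong f f' → cong (SPR.seq e f) (SPR.seq e' f')
  | par_congr {e e' f f' : SPR A} :
      cong e e' → cong f f' → cong (SPR.par e f) (SPR.par e' f')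
  | star_congr {e e' : SPR A} : cong e e' → cong (SPR.star e) (SPR.star e')
  | dagger_congr {e e' : SPR A} : cong e e' → cong (SPR.dagger e) (SPR.dagger e')

/-- `e ⋆ f`: `f` if `e` is nullable, `0` otherwise. -/
def estar {A : Type} (e f : SPR A) : SPR A := if Null e then f else SPR.zero

/-- `e ⨟ f`: `0` if `e ≃ 0`, `e · f` otherwise. -/
def eseq {A : Type} (e f : SPR A) : SPR A :=
  if cong e SPR.zero then SPR.zero else SPR.seq e f

/-- The Brzozowski-style sequential derivative δ_Σ. -/
def dseq {A : Type} : SPR A → A → SPR A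
  | SPR.zero, _ => SPR.zero
  | SPR.one, _ => SPR.zero
  | SPR.var b, a => if a = b then SPR.one else SPR.zero
  | SPR.add e f, a => SPR.add (dseq e a) (dseq f a)
  | SPR.seq e f, a => SPR.add (eseq (dseq e a) f) (estar e (dseq f a))
  | SPR.par _ _, _ => SPR.zero
  | SPR.star e, a => eseq (dseq e a) (SPR.star e)
  | SPR.dagger _, _ => SPR.zero

/-- The Brzozowski-style parallel derivative γ_Σ. -/
def dgam {A : Type} : SPR A → SPR A → SPR A → SPR A
  | SPR.zero, _, _ => SPR.zero
  | SPR.one, _, _ => SPR.zero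
  | SPR.var _, _, _ => SPR.zero
  | SPR.add e f, g, h => SPR.add (dgam e g h) (dgam f g h)
  | SPR.seq e f, g, h => SPR.add (eseq (dgam e g h) f) (estar e (dgam f g h))
  | SPR.par e f, g, h => if cong g e ∧ cong h f then SPR.one else SPR.zero
  | SPR.star e, g, h => eseq (dgam e g h) (SPR.star e)
  | SPR.dagger e, g, h =>
      if cong g e ∧ cong h (SPR.dagger e) then SPR.one else SPR.zero

/-- The trace dependency preorder ⪯_Σ of the syntactic pomset automaton
(on raw expressions, compatible with the congruence ≃). -/
inductive dleq {A : Type} : SPR A → SPR A → Prop where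
  | refl (e : SPR A) : dleq e e
  | trans {e f g : SPR A} : dleq e f → dleq f g → dleq e g
  | congr {e f : SPR A} : cong e f → dleq e f
  | delta (e : SPR A) (a : A) : dleq (dseq e a) e
  | gamma (e g h : SPR A) : dleq (dgam e g h) e
  | forkL {e g h : SPR A} : ¬ cong (dgam e g h) SPR.zero → dleq g e
  | forkR {e g h : SPR A} : ¬ cong (dgam e g h) SPR.zero → dleq h e

/-- Maximal nesting of parallel composition in an expression. -/
def dpar {A : Type} : SPR A → ℕ
  | SPR.zero => 0
  | SPR.one => 0
  | SPR.var _ => 0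
  | SPR.add e f => max (dpar e) (dpar f)
  | SPR.seq e f => max (dpar e) (dpar f)
  | SPR.par e f => max (dpar e) (dpar f) + 1
  | SPR.star e => dpar e
  | SPR.dagger e => dpar e

/-- Maximal nesting of the parallel star in an expression. -/
def ddag {A : Type} : SPR A → ℕ
  | SPR.zero => 0
  | SPR.one => 0
  | SPR.var _ => 0
  | SPR.add e f => max (ddag e) (ddag f)
  | SPR.seq e f => max (ddag e) (ddag f)
  | SPR.par e f => max (ddag e) (ddag f)
  | SPR.star e => ddag e
  | SPR.dagger e => ddag e + 1

/-- Sum of a list of expressions. -/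
def sumL {A : Type} (l : List (SPR A)) : SPR A := l.foldr SPR.add SPR.zero

/-- `E` covers `e` if `e` is congruent to a sum of elements of `E`. -/
def covers {A : Type} (E : Finset (SPR A)) (e : SPR A) : Prop :=
  ∃ l : List (SPR A), (∀ x ∈ l, x ∈ E) ∧ cong e (sumL l)

/-- `E` is cover-closed if it covers everything below any of its members. -/
def coverClosed {A : Type} (E : Finset (SPR A)) : Prop :=
  ∀ f ∈ E, ∀ g : SPR A, dleq g f → covers E g


variable {A : Type}

namespace cong

theorem zero_add (e : SPR A) : cong (SPR.add SPR.zero e) e :=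
  (add_comm _ _).trans (add_zero e)

theorem add_left_comm (a b c : SPR A) :
    cong (SPR.add a (SPR.add b c)) (SPR.add b (SPR.add a c)) :=
  (add_assoc a b c).trans <|
    (add_congr (add_comm a b) (refl c)).trans (add_assoc b a c).symm

theorem add_add_add_comm (a b c d : SPR A) :
    cong (SPR.add (SPR.add a b) (SPR.add c d)) (SPR.add (SPR.add a c) (SPR.add b d)) :=
  (add_assoc a b _).symm.trans <|
    (add_congr (refl a) (add_left_comm b c d)).trans (add_assoc a c _)

end cong

def IsZeroSum : SPR A → Prop
  | SPR.zero => True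
  | SPR.add e f => IsZeroSum e ∧ IsZeroSum f
  | _ => False

theorem cong.isZeroSum_iff {e f : SPR A} (h : cong e f) : IsZeroSum e ↔ IsZeroSum f := by
  induction h <;> simp_all only [IsZeroSum] <;> tauto

theorem cong_zero_iff_isZeroSum {e : SPR A} : cong e SPR.zero ↔ IsZeroSum e := by
  refine ⟨fun h => h.isZeroSum_iff.mpr trivial, fun h => ?_⟩
  induction e with
  | zero => exact cong.refl _
  | add e f ihe ihf => exact (cong.add_congr (ihe h.1) (ihf h.2)).trans (cong.add_zero _)
  | _ => exact h.elim

theorem cong_add_zero_iff {e f : SPR A} :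
    cong (SPR.add e f) SPR.zero ↔ cong e SPR.zero ∧ cong f SPR.zero := by
  simp only [cong_zero_iff_isZeroSum, IsZeroSum]

namespace Null

theorem not_zero : ¬ Null (SPR.zero : SPR A) := nofun

theorem add_iff {e f : SPR A} : Null (SPR.add e f) ↔ Null e ∨ Null f :=
  ⟨fun | addL _ h => .inl h | addR _ h => .inr h, fun h => h.elim (addL f) (addR e)⟩

theorem seq_iff {e f : SPR A} : Null (SPR.seq e f) ↔ Null e ∧ Null f :=
  ⟨fun | seq h₁ h₂ => ⟨h₁, h₂⟩, fun h => seq h.1 h.2⟩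

theorem par_iff {e f : SPR A} : Null (SPR.par e f) ↔ Null e ∧ Null f :=
  ⟨fun | par h₁ h₂ => ⟨h₁, h₂⟩, fun h => par h.1 h.2⟩

end Null

theorem cong.null_iff {e f : SPR A} (h : cong e f) : Null e ↔ Null f := by
  induction h <;>
    simp_all only [Null.add_iff, Null.seq_iff, Null.par_iff, Null.not_zero, Null.star,
      Null.dagger, or_false] <;> tauto

theorem sumL_nil : sumL ([] : List (SPR A)) = SPR.zero := rfl

theorem sumL_cons (x : SPR A) (l : List (SPR A)) : sumL (x :: l) = SPR.add x (sumL l) := rfl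

theorem cong.sumL_append (l₁ l₂ : List (SPR A)) :
    cong (sumL (l₁ ++ l₂)) (SPR.add (sumL l₁) (sumL l₂)) := by
  induction l₁ with
  | nil => exact (cong.zero_add _).symm
  | cons x l ih => exact (cong.add_congr (.refl x) ih).trans (cong.add_assoc _ _ _)

theorem cong.seq_sumL {l : List (SPR A)} (hl : l ≠ []) (f : SPR A) :
    cong (SPR.seq (sumL l) f) (sumL (l.map (SPR.seq · f))) := by
  induction l with
  | nil => exact absurd rfl hl
  | cons x l ih =>
    rcases l with _ | ⟨y, l⟩
    · exact (cong.seq_congr (cong.add_zero x) (.refl f)).trans (cong.add_zero _).symm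
    · exact (cong.distrib _ _ _).trans ((cong.refl _).add_congr (ih (List.cons_ne_nil _ _)))

theorem cong.add_sumL_of_mem {x : SPR A} {l : List (SPR A)} (h : x ∈ l) :
    cong (SPR.add x (sumL l)) (sumL l) := by
  induction l with
  | nil => cases h
  | cons y l ih =>
    rcases List.mem_cons.mp h with rfl | h
    · exact (cong.add_assoc x x _).trans ((cong.add_idem x).add_congr (.refl _))
    · exact (cong.add_left_comm x y _).trans ((cong.refl y).add_congr (ih h))

theorem cong.add_sumL_of_subset {l l' : List (SPR A)} (h : l ⊆ l') :
    cong (SPR.add (sumL l) (sumL l')) (sumL l') := by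
  induction l with
  | nil => exact cong.zero_add _
  | cons x l ih =>
    obtain ⟨hx, hl⟩ := List.cons_subset.mp h
    exact (cong.add_assoc x _ _).symm.trans
      (((cong.refl x).add_congr (ih hl)).trans (cong.add_sumL_of_mem hx))

theorem cong.sumL_of_subset_of_subset {l l' : List (SPR A)} (h : l ⊆ l') (h' : l' ⊆ l) :
    cong (sumL l) (sumL l') :=
  (cong.add_sumL_of_subset h').symm.trans ((cong.add_comm _ _).trans (cong.add_sumL_of_subset h))

namespace covers

variable {E : Finset (SPR A)} {e f : SPR A}

theorem of_cong (h : cong e f) (hf : covers E f) : covers E e :=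
  let ⟨l, hl, hc⟩ := hf; ⟨l, hl, h.trans hc⟩

theorem mono {E' : Finset (SPR A)} (h : E ⊆ E') (he : covers E e) : covers E' e :=
  let ⟨l, hl, hc⟩ := he; ⟨l, fun x hx => h (hl x hx), hc⟩

theorem zero : covers E SPR.zero := ⟨[], nofun, cong.refl _⟩

theorem of_mem (h : e ∈ E) : covers E e :=
  ⟨[e], by simpa using h, (cong.add_zero e).symm⟩

theorem add (he : covers E e) (hf : covers E f) : covers E (SPR.add e f) :=
  let ⟨l₁, hl₁, hc₁⟩ := he
  let ⟨l₂, hl₂, hc₂⟩ := hf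
  ⟨l₁ ++ l₂, by simpa [or_imp, forall_and] using ⟨hl₁, hl₂⟩,
    (hc₁.add_congr hc₂).trans (cong.sumL_append l₁ l₂).symm⟩

theorem estar (g : SPR A) (he : covers E e) : covers E (estar g e) := by
  unfold _root_.estar; split
  exacts [he, zero]

theorem eseq (f : SPR A) (he : covers E e) : covers (E.image (SPR.seq · f)) (eseq e f) := by
  obtain ⟨l, hl, hc⟩ := he
  unfold _root_.eseq
  split
  · exact zero
  · -- `≃` has no law `0 · f ≃ 0`, so an empty sum `sumL [] = 0` must not be multiplied out.
    have hl' : l ≠ [] := by rintro rfl; contradiction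
    refine ⟨_, fun y hy => ?_, (hc.seq_congr (.refl f)).trans (cong.seq_sumL hl' f)⟩
    obtain ⟨x, hx, rfl⟩ := List.mem_map.mp hy
    exact Finset.mem_image_of_mem _ (hl x hx)

theorem ite_one_zero (p : Prop) [Decidable p] :
    covers {SPR.one} (if p then SPR.one else SPR.zero : SPR A) := by
  split
  exacts [of_mem (Finset.mem_singleton_self _), zero]

theorem exists_subset (h : covers E f) :
    ∃ s ⊆ E, cong f (sumL s.toList) := by
  obtain ⟨l, hl, hc⟩ := h
  refine ⟨l.toFinset, fun x hx => hl x (List.mem_toFinset.mp hx), hc.trans ?_⟩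
  exact cong.sumL_of_subset_of_subset (fun x hx => by simpa using hx) (fun x hx => by simpa using hx)

end covers

theorem eseq_congr {e e' f f' : SPR A} (he : cong e e') (hf : cong f f') :
    cong (eseq e f) (eseq e' f') := by
  by_cases h : cong e SPR.zero
  · simp only [eseq, if_pos h, if_pos (he.symm.trans h), cong.refl]
  · simp only [eseq, if_neg h, if_neg fun h' => h (he.trans h')]
    exact he.seq_congr hf

theorem estar_congr {e e' f f' : SPR A} (he : cong e e') (hf : cong f f') :
    cong (estar e f) (estar e' f') := by
  unfold estar
  rw [propext he.null_iff]
  split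
  exacts [hf, cong.refl _]

theorem eseq_add (e f g : SPR A) :
    cong (eseq (SPR.add e f) g) (SPR.add (eseq e g) (eseq f g)) := by
  unfold eseq
  by_cases he : cong e SPR.zero <;> by_cases hf : cong f SPR.zero <;>
    simp only [cong_add_zero_iff, he, hf, and_self, and_false, false_and, if_true, if_false]
  · exact (cong.add_zero _).symm
  · exact (cong.seq_congr ((cong.add_congr he (.refl f)).trans (cong.zero_add f)) (.refl g)).trans
      (cong.zero_add _).symm
  · exact (cong.seq_congr ((cong.add_congr (.refl e) hf).trans (cong.add_zero e)) (.refl g)).trans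
      (cong.add_zero _).symm
  · exact cong.distrib e f g

theorem estar_add (e f g : SPR A) :
    cong (estar (SPR.add e f) g) (SPR.add (estar e g) (estar f g)) := by
  unfold estar
  by_cases he : Null e <;> by_cases hf : Null f <;> simp only [Null.add_iff, he, hf, or_self,
    or_true, true_or, if_true, if_false]
  exacts [(cong.add_idem g).symm, (cong.add_zero g).symm, (cong.zero_add g).symm,
    (cong.add_zero _).symm]

/-- The recursion shared by `dseq · a` and `dgam · g h`. -/
structure IsDerivation (D : SPR A → SPR A) : Prop where
  map_zero : D SPR.zero = SPR.zero
  map_one : D SPR.one = SPR.zero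
  map_add (e f : SPR A) : D (SPR.add e f) = SPR.add (D e) (D f)
  map_seq (e f : SPR A) : D (SPR.seq e f) = SPR.add (eseq (D e) f) (estar e (D f))
  map_star (e : SPR A) : D (SPR.star e) = eseq (D e) (SPR.star e)
  covers_var (a : A) : covers {SPR.one} (D (SPR.var a))
  covers_par (e f : SPR A) : covers {SPR.one} (D (SPR.par e f))
  covers_dagger (e : SPR A) : covers {SPR.one} (D (SPR.dagger e))
  congr_par {e e' f f' : SPR A} :
    cong e e' → cong f f' → cong (D (SPR.par e f)) (D (SPR.par e' f'))
  congr_dagger {e e' : SPR A} : cong e e' → cong (D (SPR.dagger e)) (D (SPR.dagger e'))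

namespace IsDerivation

variable {D : SPR A → SPR A}

theorem map_congr (hD : IsDerivation D) {e f : SPR A} (h : cong e f) : cong (D e) (D f) := by
  induction h with
  | add_zero => rw [hD.map_add, hD.map_zero]; exact cong.add_zero _
  | add_idem => rw [hD.map_add]; exact cong.add_idem _
  | add_comm => simp only [hD.map_add]; exact cong.add_comm _ _
  | add_assoc => simp only [hD.map_add]; exact cong.add_assoc _ _ _
  | distrib =>
    simp only [hD.map_seq, hD.map_add]
    exact (cong.add_congr (eseq_add _ _ _) (estar_add _ _ _)).trans (cong.add_add_add_comm _ _ _ _)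
  | refl => exact cong.refl _
  | symm _ ih => exact ih.symm
  | trans _ _ ih₁ ih₂ => exact ih₁.trans ih₂
  | add_congr _ _ ih₁ ih₂ => simp only [hD.map_add]; exact ih₁.add_congr ih₂
  | seq_congr h₁ h₂ ih₁ ih₂ =>
    simp only [hD.map_seq]; exact (eseq_congr ih₁ h₂).add_congr (estar_congr h₁ ih₂)
  | par_congr h₁ h₂ => exact hD.congr_par h₁ h₂
  | star_congr h ih => simp only [hD.map_star]; exact eseq_congr ih h.star_congr
  | dagger_congr h => exact hD.congr_dagger h

theorem covers_apply (hD : IsDerivation D) {E : Finset (SPR A)} (hE : ∀ x ∈ E, covers E (D x))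
    {f : SPR A} (hf : covers E f) : covers E (D f) := by
  obtain ⟨l, hl, hc⟩ := hf
  refine .of_cong (hD.map_congr hc) ?_
  clear hc
  induction l with
  | nil => rw [sumL_nil, hD.map_zero]; exact covers.zero
  | cons x l ih =>
    rw [sumL_cons, hD.map_add]
    exact (hE x (hl x List.mem_cons_self)).add (ih fun y hy => hl y (List.mem_cons_of_mem _ hy))

theorem exists_mem_not_cong_zero (hD : IsDerivation D) {l : List (SPR A)}
    (h : ¬ cong (D (sumL l)) SPR.zero) : ∃ x ∈ l, ¬ cong (D x) SPR.zero := by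
  induction l with
  | nil => rw [sumL_nil, hD.map_zero] at h; exact absurd (cong.refl _) h
  | cons x l ih =>
    rw [sumL_cons, hD.map_add, cong_add_zero_iff, not_and_or] at h
    rcases h with h | h
    · exact ⟨x, List.mem_cons_self, h⟩
    · obtain ⟨y, hy, h⟩ := ih h
      exact ⟨y, List.mem_cons_of_mem _ hy, h⟩

end IsDerivation

theorem isDerivation_dseq (a : A) : IsDerivation (dseq · a) where
  map_zero := rfl
  map_one := rfl
  map_add _ _ := rfl
  map_seq _ _ := rfl
  map_star _ := rfl
  covers_var _ := covers.ite_one_zero _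
  covers_par _ _ := covers.zero
  covers_dagger _ := covers.zero
  congr_par _ _ := cong.refl _
  congr_dagger _ := cong.refl _

theorem isDerivation_dgam (g h : SPR A) : IsDerivation (dgam · g h) where
  map_zero := rfl
  map_one := rfl
  map_add _ _ := rfl
  map_seq _ _ := rfl
  map_star _ := rfl
  covers_var _ := covers.zero
  covers_par _ _ := covers.ite_one_zero _
  covers_dagger _ := covers.ite_one_zero _
  congr_par he hf := by
    simp only [dgam]
    rw [if_congr (and_congr ⟨(·.trans he), (·.trans he.symm)⟩ ⟨(·.trans hf), (·.trans hf.symm)⟩)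
      rfl rfl]
    exact cong.refl _
  congr_dagger he := by
    simp only [dgam]
    rw [if_congr (and_congr ⟨(·.trans he), (·.trans he.symm)⟩
      ⟨(·.trans he.dagger_congr), (·.trans he.dagger_congr.symm)⟩) rfl rfl]
    exact cong.refl _

/-- Antimirov-style partial derivatives of `e`, taken for all letters and all forks at once. -/
def pderivs : SPR A → Finset (SPR A)
  | SPR.zero => ∅
  | SPR.one => ∅
  | SPR.var _ => {SPR.one}
  | SPR.add e f => pderivs e ∪ pderivs f
  | SPR.seq e f => (pderivs e).image (SPR.seq · f) ∪ pderivs f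
  | SPR.par _ _ => {SPR.one}
  | SPR.star e => (pderivs e).image (SPR.seq · (SPR.star e))
  | SPR.dagger _ => {SPR.one}

theorem IsDerivation.covers_pderivs {D : SPR A → SPR A} (hD : IsDerivation D) (e : SPR A) :
    ∀ t ∈ insert e (pderivs e), covers (pderivs e) (D t) := by
  have leaf : ∀ {s : SPR A}, pderivs s = {SPR.one} → covers {SPR.one} (D s) →
      ∀ t ∈ insert s (pderivs s), covers (pderivs s) (D t) := by
    intro s hs hcov t ht
    rw [hs] at ht ⊢
    rcases Finset.mem_insert.mp ht with rfl | ht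
    · exact hcov
    · rw [Finset.mem_singleton.mp ht, hD.map_one]; exact covers.zero
  induction e with
  | zero => simp [pderivs, hD.map_zero, covers.zero]
  | one => simp [pderivs, hD.map_one, covers.zero]
  | var a => exact leaf rfl (hD.covers_var a)
  | par e f => exact leaf rfl (hD.covers_par e f)
  | dagger e => exact leaf rfl (hD.covers_dagger e)
  | add e f ihe ihf =>
    have hle : pderivs e ⊆ pderivs (e.add f) := Finset.subset_union_left
    have hlf : pderivs f ⊆ pderivs (e.add f) := Finset.subset_union_right
    intro t ht
    rcases Finset.mem_insert.mp ht with rfl | ht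
    · rw [hD.map_add]
      exact ((ihe e (Finset.mem_insert_self _ _)).mono hle).add
        ((ihf f (Finset.mem_insert_self _ _)).mono hlf)
    · rcases Finset.mem_union.mp ht with ht | ht
      exacts [(ihe t (Finset.mem_insert_of_mem ht)).mono hle,
        (ihf t (Finset.mem_insert_of_mem ht)).mono hlf]
  | seq e f ihe ihf =>
    have hle : (pderivs e).image (SPR.seq · f) ⊆ pderivs (e.seq f) := Finset.subset_union_left
    have hlf : pderivs f ⊆ pderivs (e.seq f) := Finset.subset_union_right
    have hseq : ∀ u ∈ insert e (pderivs e), covers (pderivs (e.seq f)) (D (u.seq f)) := by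
      intro u hu
      rw [hD.map_seq]
      exact (((ihe u hu).eseq f).mono hle).add
        (((ihf f (Finset.mem_insert_self _ _)).estar u).mono hlf)
    intro t ht
    rcases Finset.mem_insert.mp ht with rfl | ht
    · exact hseq e (Finset.mem_insert_self _ _)
    · rcases Finset.mem_union.mp ht with ht | ht
      · obtain ⟨u, hu, rfl⟩ := Finset.mem_image.mp ht
        exact hseq u (Finset.mem_insert_of_mem hu)
      · exact (ihf t (Finset.mem_insert_of_mem ht)).mono hlf
  | star e ihe =>
    have hstar : covers (pderivs e.star) (D e.star) := by
      rw [hD.map_star]; exact (ihe e (Finset.mem_insert_self _ _)).eseq _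
    intro t ht
    rcases Finset.mem_insert.mp ht with rfl | ht
    · exact hstar
    · obtain ⟨u, hu, rfl⟩ := Finset.mem_image.mp ht
      rw [hD.map_seq]
      exact ((ihe u (Finset.mem_insert_of_mem hu)).eseq _).add (hstar.estar u)

def forks : SPR A → Finset (SPR A × SPR A)
  | SPR.add e f | SPR.seq e f => forks e ∪ forks f
  | SPR.par e f => insert (e, f) (forks e ∪ forks f)
  | SPR.star e => forks e
  | SPR.dagger e => insert (e, SPR.dagger e) (forks e)
  | _ => ∅

def subterms : SPR A → Finset (SPR A)
  | SPR.zero => {SPR.zero}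
  | SPR.one => {SPR.one}
  | SPR.var a => {SPR.var a}
  | SPR.add e f => insert (SPR.add e f) (subterms e ∪ subterms f)
  | SPR.seq e f => insert (SPR.seq e f) (subterms e ∪ subterms f)
  | SPR.par e f => insert (SPR.par e f) (subterms e ∪ subterms f)
  | SPR.star e => insert (SPR.star e) (subterms e)
  | SPR.dagger e => insert (SPR.dagger e) (subterms e)

theorem mem_subterms_self (e : SPR A) : e ∈ subterms e := by
  cases e <;> simp [subterms]

theorem subterms_subset {e s : SPR A} (h : s ∈ subterms e) : subterms s ⊆ subterms e := by
  induction e <;> grind [subterms]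

theorem mem_subterms_of_mem_forks {e : SPR A} {p : SPR A × SPR A} (h : p ∈ forks e) :
    p.1 ∈ subterms e ∧ p.2 ∈ subterms e := by
  induction e <;> grind [forks, subterms, mem_subterms_self]

theorem forks_subset_of_mem_pderivs {e t : SPR A} (h : t ∈ pderivs e) : forks t ⊆ forks e := by
  induction e generalizing t <;> grind [pderivs, forks]

theorem not_cong_zero_of_eseq {e f : SPR A} (h : ¬ cong (eseq e f) SPR.zero) :
    ¬ cong e SPR.zero := fun he => h (by simp only [eseq, if_pos he, cong.refl])

theorem not_cong_zero_of_estar {e f : SPR A} (h : ¬ cong (estar e f) SPR.zero) :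
    ¬ cong f SPR.zero := fun hf => h (by unfold estar; split <;> first | exact hf | exact .refl _)

theorem exists_mem_forks_of_dgam {e g h : SPR A} (hne : ¬ cong (dgam e g h) SPR.zero) :
    ∃ p ∈ forks e, cong g p.1 ∧ cong h p.2 := by
  induction e with
  | zero | one | var => exact absurd (cong.refl _) hne
  | add e f ihe ihf | seq e f ihe ihf =>
    simp only [dgam, cong_add_zero_iff, not_and_or] at hne
    rcases hne with hne | hne
    · obtain ⟨p, hp, hgh⟩ := ihe (by first | exact hne | exact not_cong_zero_of_eseq hne)
      exact ⟨p, Finset.mem_union_left _ hp, hgh⟩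
    · obtain ⟨p, hp, hgh⟩ := ihf (by first | exact hne | exact not_cong_zero_of_estar hne)
      exact ⟨p, Finset.mem_union_right _ hp, hgh⟩
  | star e ihe => exact ihe (not_cong_zero_of_eseq hne)
  | par | dagger =>
    simp only [dgam] at hne
    split_ifs at hne with hgh
    · exact ⟨_, Finset.mem_insert_self _ _, hgh⟩
    · exact absurd (cong.refl _) hne

structure DerivClosed (E : Finset (SPR A)) : Prop where
  covers_dseq : ∀ x ∈ E, ∀ a, covers E (dseq x a)
  covers_dgam : ∀ x ∈ E, ∀ g h, covers E (dgam x g h)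
  covers_fork : ∀ x ∈ E, ∀ g h, ¬ cong (dgam x g h) SPR.zero → covers E g ∧ covers E h

namespace DerivClosed

variable {E : Finset (SPR A)}

theorem covers_fork_of_covers (hE : DerivClosed E) {f g h : SPR A}
    (hne : ¬ cong (dgam f g h) SPR.zero) (hf : covers E f) : covers E g ∧ covers E h := by
  obtain ⟨l, hl, hc⟩ := hf
  obtain ⟨x, hx, hne⟩ := (isDerivation_dgam g h).exists_mem_not_cong_zero
    fun h₀ => hne (((isDerivation_dgam g h).map_congr hc).trans h₀)
  exact hE.covers_fork x (hl x hx) g h hne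

theorem covers_of_dleq (hE : DerivClosed E) {f g : SPR A} (hgf : dleq g f) (hf : covers E f) :
    covers E g := by
  induction hgf with
  | refl => exact hf
  | trans _ _ ih₁ ih₂ => exact ih₁ (ih₂ hf)
  | congr h => exact hf.of_cong h
  | delta f a => exact (isDerivation_dseq a).covers_apply (hE.covers_dseq · · a) hf
  | gamma f g h => exact (isDerivation_dgam g h).covers_apply (hE.covers_dgam · · g h) hf
  | forkL hne => exact (hE.covers_fork_of_covers hne hf).1
  | forkR hne => exact (hE.covers_fork_of_covers hne hf).2

theorem coverClosed (hE : DerivClosed E) : coverClosed E :=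
  fun _ hf _ hgf => hE.covers_of_dleq hgf (.of_mem hf)

end DerivClosed

def derivClosure (e : SPR A) : Finset (SPR A) :=
  (subterms e).biUnion fun s => insert s (pderivs s)

theorem insert_pderivs_subset_derivClosure {e s : SPR A} (hs : s ∈ subterms e) :
    insert s (pderivs s) ⊆ derivClosure e :=
  Finset.subset_biUnion_of_mem (fun s => insert s (pderivs s)) hs

theorem mem_derivClosure_of_mem_subterms {e s : SPR A} (hs : s ∈ subterms e) :
    s ∈ derivClosure e :=
  insert_pderivs_subset_derivClosure hs (Finset.mem_insert_self _ _)

theorem derivClosed_derivClosure (e : SPR A) : DerivClosed (derivClosure e) := by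
  have mem : ∀ {x}, x ∈ derivClosure e → ∃ s ∈ subterms e, x ∈ insert s (pderivs s) :=
    Finset.mem_biUnion.mp
  have pd : ∀ {s}, s ∈ subterms e → pderivs s ⊆ derivClosure e :=
    fun hs => (Finset.subset_insert _ _).trans (insert_pderivs_subset_derivClosure hs)
  refine ⟨fun x hx a => ?_, fun x hx g h => ?_, fun x hx g h hne => ?_⟩
  · obtain ⟨s, hs, hxs⟩ := mem hx
    exact ((isDerivation_dseq a).covers_pderivs s x hxs).mono (pd hs)
  · obtain ⟨s, hs, hxs⟩ := mem hx
    exact ((isDerivation_dgam g h).covers_pderivs s x hxs).mono (pd hs)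
  · obtain ⟨s, hs, hxs⟩ := mem hx
    obtain ⟨p, hp, hg, hh⟩ := exists_mem_forks_of_dgam hne
    have hps : p ∈ forks s := by
      rcases Finset.mem_insert.mp hxs with rfl | hxs
      exacts [hp, forks_subset_of_mem_pderivs hxs hp]
    obtain ⟨h₁, h₂⟩ := mem_subterms_of_mem_forks hps
    exact ⟨.of_cong hg (.of_mem (mem_derivClosure_of_mem_subterms (subterms_subset hs h₁))),
      .of_cong hh (.of_mem (mem_derivClosure_of_mem_subterms (subterms_subset hs h₂)))⟩

/-- The syntactic pomset automaton is finitely supported: the support of every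
expression is finite up to congruence, and every expression is covered by a
finite cover-closed set. -/
theorem syntactic_finitely_supported {A : Type} (e : SPR A) :
    (∃ D : Finset (SPR A), ∀ f : SPR A, dleq f e → ∃ f' ∈ D, cong f f') ∧
    (∃ E : Finset (SPR A), covers E e ∧ coverClosed E) := by
  have hE := derivClosed_derivClosure e
  have he : covers (derivClosure e) e :=
    .of_mem (mem_derivClosure_of_mem_subterms (mem_subterms_self e))
  refine ⟨⟨(derivClosure e).powerset.image fun s => sumL s.toList, fun f hf => ?_⟩,
    derivClosure e, he, hE.coverClosed⟩
  obtain ⟨s, hs, hc⟩ := (hE.covers_of_dleq hf he).exists_subset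
  exact ⟨_, Finset.mem_image_of_mem _ (Finset.mem_powerset.mpr hs), hc⟩
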